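/- arXiv:2009.07799 — 4 statements merged into one kernel-verified Lean document; each statement's English description precedes it below -/
import Mathlib

section
/- Let ρ : [0,∞) → ℝ be Lebesgue integrable. Then for any ε > 0 there exists a real polynomial p with p(0) = 0 such that ∫₀^∞ |ρ(t) − p(e^{−t})| dt ≤ ε. -/
open MeasureTheory

theorem approx_by_exp_polynomial
    (ρ : ℝ → ℝ) (hρ : IntegrableOn ρ (Set.Ici 0))
    (ε : ℝ) (hε : 0 < ε) :
    ∃ p : Polynomial ℝ, p.eval 0 = 0 ∧
      (∫ t in Set.Ici (0:ℝ), |ρ t - p.eval (Real.exp (-t))|) ≤ ε := by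
  -- Step A : extend ρ by 0
  set f : ℝ → ℝ := (Set.Ici (0:ℝ)).indicator ρ with hf_def
  have hf : Integrable f := (integrable_indicator_iff measurableSet_Ici).mpr hρ
  -- Step B : continuous compactly supported approximation
  obtain ⟨g, hgsupp, hgint, hgcont, hgInt⟩ :=
    hf.exists_hasCompactSupport_integral_sub_le (half_pos hε)
  -- Step C : bound on support
  obtain ⟨M₀, hM₀⟩ := hgsupp.isBounded.subset_closedBall 0
  set M : ℝ := max M₀ 0 with hM_def
  have hM0 : 0 ≤ M := le_max_right _ _
  have hg_zero : ∀ t : ℝ, M < |t| → g t = 0 := by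
    intro t ht
    by_contra h
    have : t ∈ Metric.closedBall (0:ℝ) M₀ := hM₀ (subset_tsupport g h)
    rw [Metric.mem_closedBall, Real.dist_eq, sub_zero] at this
    exact absurd (this.trans (le_max_left M₀ 0)) (not_le.mpr ht)
  -- Step D : the function ψ
  set c : ℝ := Real.exp (-(M + 1)) with hc_def
  have hc_pos : 0 < c := Real.exp_pos _
  set ψ : ℝ → ℝ := fun u => g (-Real.log (max u c)) / max u c with hψ_def
  have hmaxpos : ∀ u : ℝ, 0 < max u c := fun u => lt_of_lt_of_le hc_pos (le_max_right _ _)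
  have hψcont : Continuous ψ := by
    apply Continuous.div
    · exact hgcont.comp <| (Continuous.log (continuous_id.max continuous_const)
        (fun u => (hmaxpos u).ne')).neg
    · exact continuous_id.max continuous_const
    · exact fun u => (hmaxpos u).ne'
  -- key : g t = ψ (exp (-t)) * exp (-t) for t ≥ 0
  have hkey : ∀ t : ℝ, 0 ≤ t → g t = ψ (Real.exp (-t)) * Real.exp (-t) := by
    intro t ht
    set u : ℝ := Real.exp (-t) with hu_def
    have hu_pos : 0 < u := Real.exp_pos _
    rcases le_or_gt c u with h | h
    · have hmax : max u c = u := max_eq_left h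
      have : -Real.log u = t := by rw [hu_def, Real.log_exp, neg_neg]
      simp only [hψ_def, hmax, this]
      field_simp
    · have hmax : max u c = c := max_eq_right h.le
      have h1 : g (-Real.log c) = 0 := by
        apply hg_zero
        rw [hc_def, Real.log_exp, neg_neg, abs_of_nonneg (by linarith)]
        linarith
      have h2 : g t = 0 := by
        apply hg_zero
        rw [abs_of_nonneg ht]
        have : -t < -(M + 1) := Real.exp_lt_exp.mp h
        linarith
      simp only [hψ_def, hmax, h1, h2, zero_div, zero_mul]
  -- Step E : Weierstrass
  obtain ⟨r, hr⟩ := exists_polynomial_near_of_continuousOn 0 1 ψ hψcont.continuousOn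
    (ε / 2) (half_pos hε)
  refine ⟨Polynomial.X * r, by simp, ?_⟩
  set P : ℝ → ℝ := fun t => (Polynomial.X * r).eval (Real.exp (-t)) with hP_def
  -- Step F : pointwise bound on Ici 0
  have hpt : ∀ t : ℝ, 0 ≤ t → |g t - P t| ≤ (ε / 2) * Real.exp (-t) := by
    intro t ht
    have hu_mem : Real.exp (-t) ∈ Set.Icc (0:ℝ) 1 := by
      constructor
      · exact (Real.exp_pos _).le
      · exact Real.exp_le_one_iff.mpr (by linarith)
    have hP_eval : P t = Real.exp (-t) * r.eval (Real.exp (-t)) := by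
      simp [hP_def]
    rw [hkey t ht, hP_eval]
    have : ψ (Real.exp (-t)) * Real.exp (-t) - Real.exp (-t) * r.eval (Real.exp (-t))
        = (ψ (Real.exp (-t)) - r.eval (Real.exp (-t))) * Real.exp (-t) := by ring
    rw [this, abs_mul, abs_of_pos (Real.exp_pos _)]
    have := hr (Real.exp (-t)) hu_mem
    rw [abs_sub_comm] at this
    exact mul_le_mul_of_nonneg_right this.le (Real.exp_pos _).le
  -- integrability of P on Ici 0
  have hPcont : Continuous P :=
    ((Polynomial.X * r).continuous).comp (Real.continuous_exp.comp continuous_neg)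
  have hexpInt : IntegrableOn (fun t => Real.exp (-t)) (Set.Ici 0) := by
    rw [integrableOn_Ici_iff_integrableOn_Ioi]
    simpa using exp_neg_integrableOn_Ioi 0 one_pos
  have hPint : IntegrableOn P (Set.Ici 0) := by
    apply Integrable.mono' ((hgInt.integrableOn.abs).add (hexpInt.const_mul (ε / 2)))
      (hPcont.aestronglyMeasurable)
    rw [ae_restrict_iff' measurableSet_Ici]
    filter_upwards with t ht
    have e : P t = g t + (P t - g t) := by ring
    have : |P t| ≤ |g t| + ε / 2 * Real.exp (-t) := by
      calc |P t| = |g t + (P t - g t)| := by rw [← e]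
        _ ≤ |g t| + |P t - g t| := abs_add_le _ _
        _ = |g t| + |g t - P t| := by rw [abs_sub_comm]
        _ ≤ |g t| + ε / 2 * Real.exp (-t) := by linarith [hpt t ht]
    simpa [Real.norm_eq_abs] using this
  -- integral of |g - P|
  have hgPint : IntegrableOn (fun t => |g t - P t|) (Set.Ici 0) :=
    (hgInt.integrableOn.sub hPint).abs
  have hI2 : (∫ t in Set.Ici (0:ℝ), |g t - P t|) ≤ ε / 2 := by
    calc (∫ t in Set.Ici (0:ℝ), |g t - P t|)
        ≤ ∫ t in Set.Ici (0:ℝ), ε / 2 * Real.exp (-t) := by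
          apply setIntegral_mono_on hgPint (hexpInt.const_mul (ε / 2)) measurableSet_Ici
          exact fun t ht => hpt t ht
      _ = ε / 2 * ∫ t in Set.Ici (0:ℝ), Real.exp (-t) := by
          rw [integral_const_mul]
      _ = ε / 2 := by
          rw [integral_Ici_eq_integral_Ioi, integral_exp_neg_Ioi_zero, mul_one]
  -- integral of |rho - g|
  have hI1 : (∫ t in Set.Ici (0:ℝ), |ρ t - g t|) ≤ ε / 2 := by
    have heq : Set.EqOn (fun t => |ρ t - g t|) (fun t => ‖f t - g t‖) (Set.Ici 0) := by
      intro t ht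
      simp [hf_def, Set.indicator_of_mem ht, Real.norm_eq_abs]
    rw [setIntegral_congr_fun measurableSet_Ici heq]
    calc (∫ t in Set.Ici (0:ℝ), ‖f t - g t‖) ≤ ∫ t, ‖f t - g t‖ :=
          setIntegral_le_integral (hf.sub hgInt).norm (ae_of_all _ fun t => norm_nonneg _)
      _ ≤ ε / 2 := hgint
  -- conclusion
  have hρgint : IntegrableOn (fun t => |ρ t - g t|) (Set.Ici 0) :=
    (hρ.sub hgInt.integrableOn).abs
  calc (∫ t in Set.Ici (0:ℝ), |ρ t - P t|)
      ≤ ∫ t in Set.Ici (0:ℝ), (|ρ t - g t| + |g t - P t|) := by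
        apply setIntegral_mono_on ((hρ.sub hPint).abs) (hρgint.add hgPint) measurableSet_Ici
        intro t _
        exact (abs_sub_le _ _ _).trans_eq rfl
    _ = (∫ t in Set.Ici (0:ℝ), |ρ t - g t|) + ∫ t in Set.Ici (0:ℝ), |g t - P t| :=
        integral_add hρgint hgPint
    _ ≤ ε / 2 + ε / 2 := add_le_add hI1 hI2
    _ = ε := add_halves ε
end

section
/- Let ρ : ℝ → ℝ be C^α with ρ^{(k)}(t) = o(e^{−βt}) as t → ∞ for k = 0,...,α, where β > 0 and α ≥ 1. Define q(0) = 0 and q(s) = ρ(−(α+1) log s / β)/s for s ∈ (0,1]. Then q ∈ C^α([0,1]) with q(0) = q'(0) = ⋯ = q^{(α)}(0) = 0. -/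
/-!
Put `t = -c log s` with `c = (α + 1) / β`, so that `e^{βt} = s^{-(α+1)}`. On `(0, 1]` the `m`-th
derivative of `q` is `ψ_m(t) / s^{m+1}`, where `ψ_0 = ρ` and `ψ_{m+1} = -c ψ_m' - (m + 1) ψ_m`.
Each `ψ_m` is a combination of `ρ, …, ρ^{(m)}`, hence still `o(e^{-βt})` with its derivatives up
to order `α - m`, so `ψ_m(t) / s^{m+1} = o(s^{α-m})` as `s → 0⁺`. Thus every derivative of
order `≤ α` tends to `0` at `0`, and for `m < α` so does its difference quotient there: the
one-sided derivatives at `0` exist and vanish.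
-/

open Filter Real Set Topology

section DerivativeSequence

variable {𝕜 F : Type*} [NontriviallyNormedField 𝕜] [NormedAddCommGroup F] [NormedSpace 𝕜 F]
  {s : Set 𝕜} {f : ℕ → 𝕜 → F}

theorem contDiffOn_of_hasDerivWithinAt_succ (hs : UniqueDiffOn 𝕜 s) {n : ℕ}
    (hderiv : ∀ m < n, ∀ x ∈ s, HasDerivWithinAt (f m) (f (m + 1) x) s x)
    (hcont : ContinuousOn (f n) s) : ContDiffOn 𝕜 n (f 0) s := by
  induction n generalizing f with
  | zero => simpa using hcont
  | succ n ih =>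
    rw [Nat.cast_succ, contDiffOn_succ_iff_derivWithin hs]
    refine ⟨fun x hx => (hderiv 0 n.succ_pos x hx).differentiableWithinAt, by simp, ?_⟩
    have hshift : ContDiffOn 𝕜 n (f 1) s :=
      ih (f := fun m => f (m + 1)) (fun m hm => hderiv (m + 1) (by omega)) hcont
    exact hshift.congr fun x hx => (hderiv 0 n.succ_pos x hx).derivWithin (hs x hx)

theorem iteratedDerivWithin_eqOn_of_hasDerivWithinAt_succ (hs : UniqueDiffOn 𝕜 s) {n : ℕ}
    (hderiv : ∀ m < n, ∀ x ∈ s, HasDerivWithinAt (f m) (f (m + 1) x) s x) :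
    ∀ m ≤ n, EqOn (iteratedDerivWithin m (f 0) s) (f m) s := by
  intro m
  induction m with
  | zero => simp [EqOn]
  | succ m ih =>
    intro hm x hx
    rw [iteratedDerivWithin_succ, derivWithin_congr (ih (by omega)) (ih (by omega) hx),
      (hderiv m (by omega) x hx).derivWithin (hs x hx)]

end DerivativeSequence

def ExpDecaying (β : ℝ) (n : ℕ) (ψ : ℝ → ℝ) : Prop :=
  ContDiff ℝ n ψ ∧ ∀ k ≤ n, Tendsto (fun t => exp (β * t) * iteratedDeriv k ψ t) atTop (𝓝 0)

namespace ExpDecaying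

variable {β : ℝ} {n : ℕ} {ψ : ℝ → ℝ}

theorem tendsto (h : ExpDecaying β n ψ) :
    Tendsto (fun t => exp (β * t) * ψ t) atTop (𝓝 0) := by
  simpa using h.2 0 n.zero_le

theorem continuous (h : ExpDecaying β n ψ) : Continuous ψ :=
  h.1.continuous

theorem differentiable (h : ExpDecaying β n ψ) (hn : 1 ≤ n) : Differentiable ℝ ψ :=
  h.1.differentiable (by exact_mod_cast (by omega : n ≠ 0))

theorem deriv_sub_const_mul (h : ExpDecaying β (n + 1) ψ) (a b : ℝ) :
    ExpDecaying β n (fun t => a * deriv ψ t - b * ψ t) := by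
  obtain ⟨hψ, hdecay⟩ := h
  have hψ' : ContDiff ℝ n (deriv ψ) := (contDiff_succ_iff_deriv.mp hψ).2.2
  have hψn : ContDiff ℝ n ψ := hψ.of_le (by exact_mod_cast n.le_succ)
  refine ⟨(hψ'.const_smul a).sub (hψn.const_smul b), fun k hk => ?_⟩
  have hkn : (k : WithTop ℕ∞) ≤ n := by exact_mod_cast hk
  have hiter : iteratedDeriv k (fun t => a * deriv ψ t - b * ψ t) =
      fun t => a * iteratedDeriv (k + 1) ψ t - b * iteratedDeriv k ψ t := by
    funext t
    change iteratedDeriv k ((fun t => a * deriv ψ t) - fun t => b * ψ t) t = _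
    rw [iteratedDeriv_sub (contDiffAt_const.mul (hψ'.of_le hkn).contDiffAt)
      (contDiffAt_const.mul (hψn.of_le hkn).contDiffAt)]
    simp only [iteratedDeriv_const_mul_field, iteratedDeriv_succ']
  rw [hiter]
  simpa [mul_sub, mul_left_comm] using
    ((hdecay (k + 1) (by omega)).const_mul a).sub ((hdecay k (by omega)).const_mul b)

end ExpDecaying

/-- `ψ(t) / s ^ (m + 1)` at `t = -c log s`; at `s = 0` it is `ψ 0 / 0 = 0`. -/
noncomputable def logSubst (c : ℝ) (ψ : ℝ → ℝ) (m : ℕ) (s : ℝ) : ℝ :=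
  ψ (-c * log s) / s ^ (m + 1)

@[simp] theorem logSubst_zero (c : ℝ) (ψ : ℝ → ℝ) (m : ℕ) : logSubst c ψ m 0 = 0 := by
  simp [logSubst]

theorem hasDerivAt_logSubst {c : ℝ} {ψ : ℝ → ℝ} {m : ℕ} {s : ℝ} (hs : s ≠ 0)
    (hψ : DifferentiableAt ℝ ψ (-c * log s)) :
    HasDerivAt (logSubst c ψ m)
      (logSubst c (fun t => -c * deriv ψ t - (m + 1) * ψ t) (m + 1) s) s := by
  have hlog : HasDerivAt (fun x => -c * log x) (-c * s⁻¹) s :=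
    (hasDerivAt_log hs).const_mul (-c)
  refine ((hψ.hasDerivAt.comp s hlog).div (hasDerivAt_pow (m + 1) s)
    (pow_ne_zero _ hs)).congr_deriv ?_
  simp only [logSubst, Nat.add_sub_cancel, Nat.cast_add, Nat.cast_one, Function.comp]
  field_simp
  ring

theorem tendsto_logSubst_nhdsGT_zero {β c : ℝ} {ψ : ℝ → ℝ} {m N : ℕ} (hc : 0 < c)
    (hβc : β * c = N) (hmN : m + 1 ≤ N)
    (hψ : Tendsto (fun t => exp (β * t) * ψ t) atTop (𝓝 0)) :
    Tendsto (logSubst c ψ m) (𝓝[>] 0) (𝓝 0) := by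
  have hlog : Tendsto (fun s => -c * log s) (𝓝[>] 0) atTop :=
    (tendsto_const_mul_atTop_of_neg (by linarith)).mpr tendsto_log_nhdsGT_zero
  have hpow : Tendsto (fun s : ℝ => s ^ (N - (m + 1))) (𝓝[>] 0) (𝓝 (0 ^ (N - (m + 1)))) :=
    ((continuous_pow _).tendsto 0).mono_left nhdsWithin_le_nhds
  simpa using ((hψ.comp hlog).mul hpow).congr' <| by
    filter_upwards [self_mem_nhdsWithin] with s (hs : 0 < s)
    -- `exp (β t) = s⁻ᴺ` at `t = -c log s`
    have hexp : exp (β * (-c * log s)) = (s ^ N)⁻¹ := by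
      rw [← mul_assoc, mul_neg, hβc, neg_mul, exp_neg, exp_nat_mul, exp_log hs]
    have hsplit : s ^ N = s ^ (m + 1) * s ^ (N - (m + 1)) := by
      rw [← pow_add, Nat.add_sub_cancel' hmN]
    simp only [Function.comp, logSubst, hexp, hsplit]
    field_simp

theorem continuousOn_logSubst {β c : ℝ} {ψ : ℝ → ℝ} {m N : ℕ} (hc : 0 < c)
    (hβc : β * c = N) (hmN : m + 1 ≤ N) (hψc : Continuous ψ)
    (hψ : Tendsto (fun t => exp (β * t) * ψ t) atTop (𝓝 0)) :
    ContinuousOn (logSubst c ψ m) (Ici 0) := by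
  intro x (hx : 0 ≤ x)
  rcases hx.eq_or_lt with rfl | hx
  · refine continuousWithinAt_Ioi_iff_Ici.mp ?_
    simpa [ContinuousWithinAt] using tendsto_logSubst_nhdsGT_zero hc hβc hmN hψ
  · exact ((hψc.continuousAt.comp ((continuousAt_log hx.ne').const_mul _)).div
      (continuousAt_pow _ _) (pow_ne_zero _ hx.ne')).continuousWithinAt

theorem hasDerivWithinAt_logSubst {β c : ℝ} {ψ : ℝ → ℝ} {m N : ℕ} (hc : 0 < c)
    (hβc : β * c = N) (hmN : m + 2 ≤ N) (hψd : Differentiable ℝ ψ)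
    (hψ : Tendsto (fun t => exp (β * t) * ψ t) atTop (𝓝 0)) {x : ℝ} (hx : 0 ≤ x) :
    HasDerivWithinAt (logSubst c ψ m)
      (logSubst c (fun t => -c * deriv ψ t - (m + 1) * ψ t) (m + 1) x) (Ici 0) x := by
  rcases hx.eq_or_lt with rfl | hx
  · refine hasDerivWithinAt_Ioi_iff_Ici.mp ?_
    rw [logSubst_zero, hasDerivWithinAt_iff_tendsto_slope, sdiff_singleton_eq_self self_notMem_Ioi]
    -- the difference quotient of `logSubst c ψ m` at `0` is `logSubst c ψ (m + 1)`
    refine (tendsto_logSubst_nhdsGT_zero (m := m + 1) hc hβc hmN hψ).congr' ?_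
    filter_upwards [self_mem_nhdsWithin] with s (hs : 0 < s)
    rw [slope_def_field, logSubst_zero, sub_zero, sub_zero, logSubst, logSubst, div_div, pow_succ]
  · exact (hasDerivAt_logSubst hx.ne' (hψd _)).hasDerivWithinAt

noncomputable def logSubstNumerator (c : ℝ) (ρ : ℝ → ℝ) : ℕ → ℝ → ℝ
  | 0 => ρ
  | m + 1 => fun t =>
      -c * deriv (logSubstNumerator c ρ m) t - (m + 1) * logSubstNumerator c ρ m t

theorem expDecaying_logSubstNumerator {β c : ℝ} {n : ℕ} {ρ : ℝ → ℝ} (hρ : ExpDecaying β n ρ) :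
    ∀ m ≤ n, ExpDecaying β (n - m) (logSubstNumerator c ρ m)
  | 0, _ => hρ
  | m + 1, hm => by
    have hprev : ExpDecaying β (n - (m + 1) + 1) (logSubstNumerator c ρ m) := by
      rw [show n - (m + 1) + 1 = n - m by omega]
      exact expDecaying_logSubstNumerator hρ m (by omega)
    exact hprev.deriv_sub_const_mul _ _

theorem transformed_density_smooth_general
    (α : ℕ) (β : ℝ) (hβ : 0 < β)
    (ρ : ℝ → ℝ) (hρ : ContDiff ℝ α ρ)
    (hdecay : ∀ k ≤ α, Tendsto (fun t => Real.exp (β * t) * iteratedDeriv k ρ t)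
        atTop (nhds 0))
    (q : ℝ → ℝ) (hq0 : q 0 = 0)
    (hq : ∀ s ∈ Set.Ioc (0:ℝ) 1, q s = ρ (-(α + 1) * Real.log s / β) / s) :
    ContDiffOn ℝ α q (Set.Icc 0 1) ∧
      ∀ k ≤ α, iteratedDerivWithin k q (Set.Icc 0 1) 0 = 0 := by
  set c : ℝ := (α + 1) / β
  have hc : 0 < c := by positivity
  have hβc : β * c = ((α + 1 : ℕ) : ℝ) := by push_cast; simp only [c]; field_simp
  set f : ℕ → ℝ → ℝ := fun m => logSubst c (logSubstNumerator c ρ m) m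
  have hnum := expDecaying_logSubstNumerator (c := c) ⟨hρ, hdecay⟩
  have hderiv : ∀ m < α, ∀ x ∈ Icc (0 : ℝ) 1,
      HasDerivWithinAt (f m) (f (m + 1) x) (Icc 0 1) x := fun m hm x hx =>
    (hasDerivWithinAt_logSubst hc hβc (by omega) ((hnum m hm.le).differentiable (by omega))
      (hnum m hm.le).tendsto hx.1).mono Icc_subset_Ici_self
  have hcont : ContinuousOn (f α) (Icc 0 1) :=
    (continuousOn_logSubst hc hβc le_rfl (hnum α le_rfl).continuous
      (hnum α le_rfl).tendsto).mono Icc_subset_Ici_self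
  have hqf : EqOn q (f 0) (Icc 0 1) := by
    intro s ⟨hs0, hs1⟩
    rcases hs0.eq_or_lt with rfl | hs0
    · simp [f, hq0]
    · rw [hq s ⟨hs0, hs1⟩]
      simp only [f, logSubst, logSubstNumerator, zero_add, pow_one]
      congr 2
      ring
  have hUD : UniqueDiffOn ℝ (Icc (0 : ℝ) 1) := uniqueDiffOn_Icc zero_lt_one
  have h0 : (0 : ℝ) ∈ Icc (0 : ℝ) 1 := ⟨le_rfl, zero_le_one⟩
  refine ⟨(contDiffOn_of_hasDerivWithinAt_succ hUD hderiv hcont).congr hqf, fun k hk => ?_⟩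
  rw [iteratedDerivWithin_congr hqf h0,
    iteratedDerivWithin_eqOn_of_hasDerivWithinAt_succ hUD hderiv k hk h0]
  exact logSubst_zero _ _ _

theorem transformed_density_smooth
    (α : ℕ) (hα : 1 ≤ α) (β : ℝ) (hβ : 0 < β)
    (ρ : ℝ → ℝ) (hρ : ContDiff ℝ α ρ)
    (hdecay : ∀ k ≤ α, Tendsto (fun t => Real.exp (β * t) * iteratedDeriv k ρ t)
        atTop (nhds 0))
    (q : ℝ → ℝ) (hq0 : q 0 = 0)
    (hq : ∀ s ∈ Set.Ioc (0:ℝ) 1, q s = ρ (-(α + 1) * Real.log s / β) / s) :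
    ContDiffOn ℝ α q (Set.Icc 0 1) ∧
      ∀ k ≤ α, iteratedDerivWithin k q (Set.Icc 0 1) 0 = 0 :=
  transformed_density_smooth_general α β hβ ρ hρ hdecay q hq0 hq
end

section
/- Fix distinct positive reals w₁*, ..., w_{m*}* and nonzero reals a₁*, ..., a_{m*}*, and let ρ̄(t) = ∑_{j=1}^{m*} aⱼ* e^{−wⱼ* t}. Suppose a ∈ ℝᵐ and w ∈ (0,∞)ᵐ satisfy ∑_{i=1}^{m} aᵢ e^{−wᵢ t} = ρ̄(t) for all t ≥ 0. Then: for each j ∈ {1,...,m*}, the set I_j = {i : wᵢ = wⱼ*} is nonempty and ∑_{i∈I_j} aᵢ = aⱼ*; and for every value v among the wᵢ not equal to any wⱼ*, the sum of aᵢ over {i : wᵢ = v} is zero. -/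
open Finset Filter Real

lemma exp_indep (S : Finset ℝ) (c : ℝ → ℝ)
    (h : ∀ t : ℝ, 0 ≤ t → ∑ v ∈ S, c v * Real.exp (-v * t) = 0) :
    ∀ v ∈ S, c v = 0 := by
  classical
  induction S using Finset.strongInduction with
  | _ S ih =>
    intro v hv
    have hne : S.Nonempty := ⟨v, hv⟩
    set v₀ := S.min' hne with hv₀
    -- First, c v₀ = 0 via taking t → ∞ after multiplying by exp (v₀ t)
    have hc0 : c v₀ = 0 := by
      have hg : ∀ t : ℝ, 0 ≤ t →
          c v₀ + ∑ u ∈ S.erase v₀, c u * Real.exp (-(u - v₀) * t) = 0 := by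
        intro t ht
        have h1 := h t ht
        rw [← Finset.add_sum_erase _ _ (S.min'_mem hne)] at h1
        have h2 : Real.exp (v₀ * t) * (c v₀ * Real.exp (-v₀ * t) +
            ∑ u ∈ S.erase v₀, c u * Real.exp (-u * t)) = 0 := by rw [h1]; ring
        rw [mul_add, Finset.mul_sum] at h2
        convert h2 using 2
        · rw [← mul_assoc, mul_comm (Real.exp _), mul_assoc, ← Real.exp_add]
          simp
        · apply Finset.sum_congr rfl
          intro u _
          rw [← mul_assoc, mul_comm (Real.exp _), mul_assoc, ← Real.exp_add]
          ring_nf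
      -- the function tends to c v₀ + 0 but is eventually 0
      have htend : Tendsto (fun t : ℝ => c v₀ +
          ∑ u ∈ S.erase v₀, c u * Real.exp (-(u - v₀) * t)) atTop (nhds (c v₀)) := by
        have : Tendsto (fun t : ℝ =>
            ∑ u ∈ S.erase v₀, c u * Real.exp (-(u - v₀) * t)) atTop (nhds 0) := by
          have : Tendsto (fun t : ℝ => ∑ u ∈ S.erase v₀,
              c u * Real.exp (-(u - v₀) * t)) atTop (nhds (∑ u ∈ S.erase v₀, (0 : ℝ))) := by
            apply tendsto_finset_sum
            intro u hu
            have hu' : v₀ < u := by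
              rcases lt_or_eq_of_le (S.min'_le u (Finset.mem_of_mem_erase hu)) with h' | h'
              · exact h'
              · exact absurd h'.symm (Finset.ne_of_mem_erase hu)
            have h1 : Tendsto (fun t : ℝ => (u - v₀) * t) atTop atTop :=
              tendsto_id.const_mul_atTop (by linarith)
            have h2 : Tendsto (fun t : ℝ => Real.exp (-(u - v₀) * t)) atTop (nhds 0) := by
              refine (Real.tendsto_exp_neg_atTop_nhds_zero.comp h1).congr fun t => ?_
              simp only [Function.comp_apply, neg_mul]
            simpa using h2.const_mul (c u)
          simpa using this
        simpa using (tendsto_const_nhds (x := c v₀)).add this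
      have hzero : Tendsto (fun t : ℝ => c v₀ +
          ∑ u ∈ S.erase v₀, c u * Real.exp (-(u - v₀) * t)) atTop (nhds 0) := by
        apply Tendsto.congr' _ tendsto_const_nhds
        filter_upwards [eventually_ge_atTop (0 : ℝ)] with t ht
        exact (hg t ht).symm
      exact tendsto_nhds_unique htend hzero
    -- Now the sum over erase v₀ vanishes for all t
    by_cases hvv : v = v₀
    · rw [hvv]; exact hc0
    · apply ih (S.erase v₀) (Finset.erase_ssubset (S.min'_mem hne))
      · intro t ht
        have h1 := h t ht
        rw [← Finset.add_sum_erase _ _ (S.min'_mem hne), hc0] at h1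
        simpa using h1
      · exact Finset.mem_erase.mpr ⟨hvv, hv⟩

theorem exp_sum_representation_structure
    (m mstar : ℕ) (hmm : mstar ≤ m)
    (astar : Fin mstar → ℝ) (wstar : Fin mstar → ℝ)
    (hastar : ∀ j, astar j ≠ 0) (hwstar : ∀ j, 0 < wstar j)
    (hdist : Function.Injective wstar)
    (a : Fin m → ℝ) (w : Fin m → ℝ) (hw : ∀ i, 0 < w i)
    (hrep : ∀ t : ℝ, 0 ≤ t →
      ∑ i, a i * Real.exp (-(w i) * t) = ∑ j, astar j * Real.exp (-(wstar j) * t)) :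
    (∀ j, (∃ i, w i = wstar j) ∧
        ∑ i ∈ Finset.univ.filter (fun i => w i = wstar j), a i = astar j) ∧
    (∀ v : ℝ, (∃ i, w i = v) → (∀ j, v ≠ wstar j) →
        ∑ i ∈ Finset.univ.filter (fun i => w i = v), a i = 0) := by
  classical
  set T : Finset ℝ := (Finset.univ.image w) ∪ (Finset.univ.image wstar) with hT
  set c : ℝ → ℝ := fun v =>
    (∑ i ∈ Finset.univ.filter (fun i => w i = v), a i)
    - (∑ j ∈ Finset.univ.filter (fun j => wstar j = v), astar j) with hc
  have hmaps : ∀ i ∈ (Finset.univ : Finset (Fin m)), w i ∈ T := by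
    intro i _; exact Finset.mem_union_left _ (Finset.mem_image_of_mem w (Finset.mem_univ i))
  have hmaps' : ∀ j ∈ (Finset.univ : Finset (Fin mstar)), wstar j ∈ T := by
    intro j _; exact Finset.mem_union_right _ (Finset.mem_image_of_mem wstar (Finset.mem_univ j))
  have key : ∀ v ∈ T, c v = 0 := by
    apply exp_indep
    intro t ht
    have e1 : ∑ v ∈ T, (∑ i ∈ Finset.univ.filter (fun i => w i = v), a i) * Real.exp (-v * t)
        = ∑ i, a i * Real.exp (-(w i) * t) := by
      rw [← Finset.sum_fiberwise_of_maps_to hmaps (fun i => a i * Real.exp (-(w i) * t))]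
      apply Finset.sum_congr rfl
      intro v _
      rw [Finset.sum_mul]
      apply Finset.sum_congr rfl
      intro i hi
      rw [(Finset.mem_filter.mp hi).2]
    have e2 : ∑ v ∈ T, (∑ j ∈ Finset.univ.filter (fun j => wstar j = v), astar j) *
          Real.exp (-v * t)
        = ∑ j, astar j * Real.exp (-(wstar j) * t) := by
      rw [← Finset.sum_fiberwise_of_maps_to hmaps' (fun j => astar j * Real.exp (-(wstar j) * t))]
      apply Finset.sum_congr rfl
      intro v _
      rw [Finset.sum_mul]
      apply Finset.sum_congr rfl
      intro j hj
      rw [(Finset.mem_filter.mp hj).2]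
    calc ∑ v ∈ T, c v * Real.exp (-v * t)
        = ∑ v ∈ T, ((∑ i ∈ Finset.univ.filter (fun i => w i = v), a i) * Real.exp (-v * t)
          - (∑ j ∈ Finset.univ.filter (fun j => wstar j = v), astar j) * Real.exp (-v * t)) := by
          apply Finset.sum_congr rfl; intro v _; rw [hc]; ring
      _ = 0 := by rw [Finset.sum_sub_distrib, e1, e2, hrep t ht, sub_self]
  constructor
  · intro j
    have hjT : wstar j ∈ T := hmaps' j (Finset.mem_univ j)
    have hcj := key _ hjT
    have hfilt : Finset.univ.filter (fun j' => wstar j' = wstar j) = {j} := by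
      ext j'
      simp only [Finset.mem_filter, Finset.mem_univ, true_and, Finset.mem_singleton]
      exact ⟨fun h => hdist h, fun h => by rw [h]⟩
    simp only [hc] at hcj
    simp only [hfilt, Finset.sum_singleton] at hcj
    have hsum : ∑ i ∈ Finset.univ.filter (fun i => w i = wstar j), a i = astar j := by
      linarith [sub_eq_zero.mp hcj]
    refine ⟨?_, hsum⟩
    by_contra hno
    push_neg at hno
    have : Finset.univ.filter (fun i => w i = wstar j) = ∅ := by
      apply Finset.filter_eq_empty_iff.mpr
      intro i _; exact hno i
    rw [this, Finset.sum_empty] at hsum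
    exact hastar j hsum.symm
  · intro v ⟨i, hi⟩ hvne
    have hvT : v ∈ T := hi ▸ hmaps i (Finset.mem_univ i)
    have hcv := key _ hvT
    simp only [hc] at hcv
    have hfilt : Finset.univ.filter (fun j => wstar j = v) = ∅ := by
      apply Finset.filter_eq_empty_iff.mpr
      intro j _
      exact fun h => hvne j h.symm
    rw [hfilt, Finset.sum_empty, sub_zero] at hcv
    exact hcv
end

section
/- For positive reals w₁, ..., wₘ and w₁*, ..., w_{m*}*, and reals a₁,...,aₘ, a₁*,...,a_{m*}*, suppose ∑_{i=1}^m aᵢ e^{−wᵢ t} = ∑_{j=1}^{m*} aⱼ* e^{−wⱼ* t} for all t ≥ 0. Then for every k ∈ [m] and every positive integer n, ∑_{i=1}^m aᵢ/(w_k + wᵢ)ⁿ = ∑_{j=1}^{m*} aⱼ*/(w_k + wⱼ*)ⁿ. -/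
open MeasureTheory Set Real Nat

lemma aux_integrable {r : ℝ} (hr : 0 < r) (p : ℕ) :
    IntegrableOn (fun t : ℝ => t ^ p * Real.exp (-(r * t))) (Ioi 0) := by
  apply integrable_of_isBigO_exp_neg (half_pos hr)
  · exact (continuous_pow p).continuousOn.mul (by fun_prop)
  · have h1 := (isLittleO_pow_exp_pos_mul_atTop p (half_pos hr)).isBigO
    have h2 := Asymptotics.isBigO_refl (fun t : ℝ => Real.exp (-(r * t))) Filter.atTop
    have h3 := h1.mul h2
    apply h3.trans
    apply Asymptotics.IsBigO.of_bound 1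
    filter_upwards with t
    rw [← Real.exp_add, one_mul]
    apply le_of_eq
    congr 1
    ring

lemma aux_value {r : ℝ} (hr : 0 < r) (p : ℕ) :
    ∫ t in Ioi (0:ℝ), t ^ p * Real.exp (-(r * t)) = p ! / r ^ (p + 1) := by
  have h := Real.integral_rpow_mul_exp_neg_mul_Ioi (a := (p : ℝ) + 1) (by positivity) hr
  have h1 : ∀ t : ℝ, t ^ ((p : ℝ) + 1 - 1) = t ^ p := by
    intro t
    rw [add_sub_cancel_right, Real.rpow_natCast]
  simp_rw [h1] at h
  rw [h]
  have h2 : ((1:ℝ)/r) ^ ((p : ℝ) + 1) = ((1:ℝ)/r) ^ (p + 1) := by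
    rw [show ((p : ℝ) + 1) = ((p + 1 : ℕ) : ℝ) from by push_cast; ring, Real.rpow_natCast]
  rw [h2, Real.Gamma_nat_eq_factorial, div_pow, one_pow]
  ring

lemma aux_sum_integral {N : ℕ} (b v : Fin N → ℝ) (hv : ∀ i, 0 < v i) {c : ℝ}
    (hcpos : 0 < c) (p : ℕ) :
    ∑ i, b i * ((p ! : ℝ) / (c + v i) ^ (p + 1))
      = ∫ t in Ioi (0:ℝ), t ^ p * Real.exp (-c * t) * ∑ i, b i * Real.exp (-(v i) * t) := by
  have hterm : ∀ i : Fin N, b i * ((p ! : ℝ) / (c + v i) ^ (p + 1))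
      = ∫ t in Ioi (0:ℝ), b i * (t ^ p * Real.exp (-((c + v i) * t))) := by
    intro i
    rw [MeasureTheory.integral_const_mul, aux_value (add_pos hcpos (hv i)) p]
  rw [Finset.sum_congr rfl (fun i _ => hterm i),
    ← integral_finset_sum _ (fun i _ => ((aux_integrable (add_pos hcpos (hv i)) p).const_mul (b i)))]
  apply setIntegral_congr_fun measurableSet_Ioi
  intro t _
  dsimp only
  rw [Finset.mul_sum]
  apply Finset.sum_congr rfl
  intro i _
  rw [show -((c + v i) * t) = -c * t + -(v i) * t by ring, Real.exp_add]
  ring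

theorem exp_sum_eq_implies_moment_eq
    (m mstar : ℕ)
    (a : Fin m → ℝ) (w : Fin m → ℝ) (hw : ∀ i, 0 < w i)
    (astar : Fin mstar → ℝ) (wstar : Fin mstar → ℝ) (hwstar : ∀ j, 0 < wstar j)
    (hrep : ∀ t : ℝ, 0 ≤ t →
      ∑ i, a i * Real.exp (-(w i) * t) = ∑ j, astar j * Real.exp (-(wstar j) * t))
    (k : Fin m) (n : ℕ) (hn : 0 < n) :
    ∑ i, a i / (w k + w i) ^ n = ∑ j, astar j / (w k + wstar j) ^ n := by
  obtain ⟨p, rfl⟩ : ∃ p, n = p + 1 := ⟨n - 1, (Nat.succ_pred_eq_of_pos hn).symm⟩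
  have hc : ∀ i, (0:ℝ) < w k + w i := fun i => add_pos (hw k) (hw i)
  have hcs : ∀ j, (0:ℝ) < w k + wstar j := fun j => add_pos (hw k) (hwstar j)
  have key : ∑ i, a i * ((p ! : ℝ) / (w k + w i) ^ (p + 1))
      = ∑ j, astar j * ((p ! : ℝ) / (w k + wstar j) ^ (p + 1)) := by
    rw [aux_sum_integral a w hw (hw k) p, aux_sum_integral astar wstar hwstar (hw k) p]
    apply setIntegral_congr_fun measurableSet_Ioi
    intro t ht
    dsimp only
    rw [hrep t (le_of_lt ht)]
  have hfac : (p ! : ℝ) ≠ 0 := by positivity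
  have expand : ∀ (x c : ℝ), 0 < c →
      x / c ^ (p + 1) = x * ((p ! : ℝ) / c ^ (p + 1)) / (p ! : ℝ) := by
    intro x c hcpos
    field_simp
  calc ∑ i, a i / (w k + w i) ^ (p + 1)
      = (∑ i, a i * ((p ! : ℝ) / (w k + w i) ^ (p + 1))) / (p ! : ℝ) := by
        rw [Finset.sum_div]
        exact Finset.sum_congr rfl fun i _ => expand (a i) _ (hc i)
    _ = (∑ j, astar j * ((p ! : ℝ) / (w k + wstar j) ^ (p + 1))) / (p ! : ℝ) := by rw [key]
    _ = ∑ j, astar j / (w k + wstar j) ^ (p + 1) := by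
        rw [Finset.sum_div]
        exact Finset.sum_congr rfl fun j _ => (expand (astar j) _ (hcs j)).symm
end
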